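/- arXiv:2510.22116 — 2 statements merged into one kernel-verified Lean document; each statement's English description precedes it below -/
import Mathlib

section
/- Let P = ℤ^d or ℝ^d with the product order, S = (S_1,…,S_n) a sequence of pairwise disjoint finite subsets of P with n ≥ 2, and M, N pointwise finite-dimensional persistence modules over P. Define d_E(M,N)_S := max_{0 ≤ i ≤ n−1} d_E(rk^i_{M,S}, rk^i_{N,S}) and d_L(M,N)_S := max_{0 ≤ i ≤ n−1} ‖λ_{rk^i_{M,S}} − λ_{rk^i_{N,S}}‖_∞. Then d_L(M,N)_S ≤ d_E(M,N)_S ≤ d_I(M,N). -/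
/-! An `ε⃗`-interleaving `(f, g)` makes the comparison map `M[x - ε⃗] → M[y + ε⃗]` factor as
`g ∘ N[x → y] ∘ f`. The slicewise maps induced by morphisms commute with the nilpotent
operators `T`, so `f` carries `Im T^i_{M[x-ε⃗],S}` into `Im T^i_{N[x],S}`; hence
`rk^i_{M,S}(x - ε⃗, y + ε⃗) ≤ rk^i_{N,S}(x, y)`, which is the erosion bound. The landscape bound
is formal: if `F(x - h, x + h) ≥ k` on the box of radius `δ` and `F` is `ε⃗`-eroded by `G`,
then `G(x - h, x + h) ≥ k` on the box of radius `δ - ε`. -/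

open scoped Classical ENNReal

noncomputable section

/-- A persistence module over a poset `P` with coefficients in a field `K`:
vector spaces `V x` together with structure maps `map : V x →ₗ V y` for `x ≤ y`. -/
structure PersistenceModule (K : Type) [Field K] (P : Type) [PartialOrder P] where
  V : P → Type
  [acg : ∀ x, AddCommGroup (V x)]
  [mod : ∀ x, Module K (V x)]
  map : ∀ {x y : P}, x ≤ y → (V x →ₗ[K] V y)
  map_refl : ∀ x : P, map (le_refl x) = LinearMap.id
  map_comp : ∀ {x y z : P} (hxy : x ≤ y) (hyz : y ≤ z),
      (map hyz).comp (map hxy) = map (hxy.trans hyz)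

attribute [instance] PersistenceModule.acg PersistenceModule.mod

variable {K : Type} [Field K]

section Basic

variable {P : Type} [PartialOrder P]

/-- Pointwise finite-dimensionality. -/
def PersistenceModule.pfd (M : PersistenceModule K P) : Prop :=
  ∀ x, FiniteDimensional K (M.V x)

/-- A morphism of persistence modules. -/
structure PersistenceHom (M N : PersistenceModule K P) where
  app : ∀ x, M.V x →ₗ[K] N.V x
  naturality : ∀ {x y : P} (h : x ≤ y),
      (app y).comp (M.map h) = (N.map h).comp (app x)

/-- The identity morphism. -/
def PersistenceHom.id (M : PersistenceModule K P) : PersistenceHom M M where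
  app _ := LinearMap.id
  naturality _ := by simp

/-- Composition of morphisms of persistence modules. -/
def PersistenceHom.comp {M N L : PersistenceModule K P}
    (g : PersistenceHom N L) (f : PersistenceHom M N) : PersistenceHom M L where
  app x := (g.app x).comp (f.app x)
  naturality {x y} h := by
    ext v
    have hf := LinearMap.congr_fun (f.naturality h) v
    have hg := LinearMap.congr_fun (g.naturality h) (f.app x v)
    simp only [LinearMap.comp_apply] at hf hg ⊢
    rw [hf, hg]

/-- Two persistence modules are isomorphic iff there is a morphism which is
pointwise bijective. -/
def PersistenceIso (M N : PersistenceModule K P) : Prop :=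
  ∃ f : PersistenceHom M N, ∀ x, Function.Bijective (f.app x)

/-- The (pointwise) direct sum of two persistence modules. -/
def PersistenceModule.dsum (M₁ M₂ : PersistenceModule K P) : PersistenceModule K P where
  V x := M₁.V x × M₂.V x
  map h := (M₁.map h).prodMap (M₂.map h)
  map_refl x := by
    show (M₁.map (le_refl x)).prodMap (M₂.map (le_refl x)) = LinearMap.id
    rw [M₁.map_refl, M₂.map_refl]; rfl
  map_comp hxy hyz := by
    show ((M₁.map hyz).prodMap (M₂.map hyz)).comp ((M₁.map hxy).prodMap (M₂.map hxy)) =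
      (M₁.map (hxy.trans hyz)).prodMap (M₂.map (hxy.trans hyz))
    rw [← M₁.map_comp hxy hyz, ← M₂.map_comp hxy hyz]; rfl

/-- The rank of a linear map, as a natural number. -/
noncomputable def lrank {V W : Type} [AddCommGroup V] [Module K V]
    [AddCommGroup W] [Module K W] (f : V →ₗ[K] W) : ℕ :=
  Module.finrank K (LinearMap.range f)

/-- The classical rank invariant of a persistence module. -/
noncomputable def rankInv (M : PersistenceModule K P) (x y : P) : ℕ∞ :=
  if h : x ≤ y then (lrank (M.map h) : ℕ∞) else ⊤

variable {n : ℕ}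

/-- The index set of the restriction `M|_S`: the disjoint union of the slices. -/
abbrev SliceIdx (S : Fin n → Finset P) : Type := Σ i : Fin n, {x // x ∈ S i}

/-- The underlying vector space of the restriction `M|_S = ⊕_{x ∈ S₁ ∪ … ∪ Sₙ} M_x`. -/
abbrev sliceSpace (M : PersistenceModule K P) (S : Fin n → Finset P) : Type :=
  (p : SliceIdx S) → M.V p.2.1

/-- The nilpotent operator `T_{M,S}` on `M|_S`: its component `M_x → M_y` is the
structure map `M_{yx}` if `x ∈ S_i`, `y ∈ S_{i+1}` and `x ≤ y`, and `0` otherwise. -/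
noncomputable def TMap (M : PersistenceModule K P) (S : Fin n → Finset P) :
    sliceSpace M S →ₗ[K] sliceSpace M S :=
  LinearMap.pi fun p => ∑ q : SliceIdx S,
    if h : (q.1 : ℕ) + 1 = (p.1 : ℕ) ∧ q.2.1 ≤ p.2.1 then
      (M.map h.2).comp (LinearMap.proj q)
    else 0

/-- The restriction `f|_S = ⊕_{x ∈ S} f_x` of a morphism to the slices. -/
noncomputable def sliceHom {M N : PersistenceModule K P} (f : PersistenceHom M N)
    (S : Fin n → Finset P) : sliceSpace M S →ₗ[K] sliceSpace N S :=
  LinearMap.pi fun p => (f.app p.2.1).comp (LinearMap.proj p)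

/-- The `i`-th entry of the Jordan type of `M` at `S` (as an integer):
`a_i = rank(T^{i-1}) + rank(T^{i+1}) - 2 rank(T^i)`, the number of `i × i`
Jordan blocks of the nilpotent operator `T_{M,S}`. -/
noncomputable def jt (M : PersistenceModule K P) (S : Fin n → Finset P) (i : ℕ) : ℤ :=
  (lrank (TMap M S ^ (i - 1)) : ℤ) + (lrank (TMap M S ^ (i + 1)) : ℤ)
    - 2 * (lrank (TMap M S ^ i) : ℤ)

end Basic

section Shifts

variable {P : Type} [AddCommGroup P] [PartialOrder P] [IsOrderedAddMonoid P]

/-- The shift `M[x]` of a persistence module, `(M[x])_z = M_{x+z}`. -/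
def PersistenceModule.shift (M : PersistenceModule K P) (x : P) :
    PersistenceModule K P where
  V z := M.V (x + z)
  map h := M.map (add_le_add_right h x)
  map_refl z := M.map_refl (x + z)
  map_comp hxy hyz := M.map_comp _ _

/-- Shifts preserve pointwise finite-dimensionality. -/
theorem PersistenceModule.pfd.shift {M : PersistenceModule K P} (hM : M.pfd) (x : P) :
    (M.shift x).pfd := fun z => hM (x + z)

/-- The shift `f[x]` of a morphism of persistence modules. -/
def PersistenceHom.shiftHom {M N : PersistenceModule K P} (f : PersistenceHom M N)
    (x : P) : PersistenceHom (M.shift x) (N.shift x) where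
  app z := f.app (x + z)
  naturality h := f.naturality (add_le_add_right h x)

/-- The shift morphism `sh_M^ε : M → M[ε]`, with components `M_{z+ε,z}`. -/
def shMor (M : PersistenceModule K P) (ε : P) (hε : 0 ≤ ε) :
    PersistenceHom M (M.shift ε) where
  app z := M.map (le_add_of_nonneg_left hε)
  naturality {z w} h := by
    show (M.map (le_add_of_nonneg_left hε)).comp (M.map h) =
      (M.map (add_le_add_right h ε)).comp (M.map (le_add_of_nonneg_left hε))
    rw [M.map_comp, M.map_comp]

/-- `(f, g)` form an `ε`-interleaving between `M` and `N`: componentwise,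
`g[ε] ∘ f = sh_M^{2ε}` and `f[ε] ∘ g = sh_N^{2ε}`. -/
def IsInterleavingPair {M N : PersistenceModule K P} (ε : P) (hε : 0 ≤ ε)
    (f : PersistenceHom M (N.shift ε)) (g : PersistenceHom N (M.shift ε)) : Prop :=
  (∀ z : P, (g.app (ε + z)).comp (f.app z) =
    M.map ((le_add_of_nonneg_left hε).trans
      (add_le_add_right (le_add_of_nonneg_left hε) ε))) ∧
  (∀ z : P, (f.app (ε + z)).comp (g.app z) =
    N.map ((le_add_of_nonneg_left hε).trans
      (add_le_add_right (le_add_of_nonneg_left hε) ε)))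

/-- There exists an `ε`-interleaving between `M` and `N`. -/
def IsInterleaving (M N : PersistenceModule K P) (ε : P) (hε : 0 ≤ ε) : Prop :=
  ∃ (f : PersistenceHom M (N.shift ε)) (g : PersistenceHom N (M.shift ε)),
    IsInterleavingPair ε hε f g

variable {n : ℕ}

/-- The map `⊕_{z ∈ S} M_{y+z,x+z} : M[x]|_S → M[y]|_S` for `x ≤ y`. -/
noncomputable def transMap (M : PersistenceModule K P) (S : Fin n → Finset P)
    {x y : P} (h : x ≤ y) :
    sliceSpace (M.shift x) S →ₗ[K] sliceSpace (M.shift y) S :=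
  LinearMap.pi fun p => (M.map (add_le_add_left h p.2.1)).comp (LinearMap.proj p)

/-- The degree-`i` Jordan rank invariant `rk^i_{M,S}(x,y)`: for `x ≤ y` it is the rank
of the structure map `(M^i_S)_{yx}` of the degree-`i` Jordan module, i.e. the rank of
the restriction of `⊕_z M_{y+z,x+z}` to `Im(T^i_{M[x],S})`; it is `∞` otherwise. -/
noncomputable def jordanRk (M : PersistenceModule K P) (S : Fin n → Finset P)
    (i : ℕ) (x y : P) : ℕ∞ :=
  if h : x ≤ y then
    (Module.finrank K
      (Submodule.map (transMap M S h) (LinearMap.range (TMap (M.shift x) S ^ i))) : ℕ∞)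
  else ⊤

end Shifts

section Functors

variable {P : Type} [PartialOrder P]

/-- A functor from the category of pointwise finite-dimensional persistence modules
over `P` to the category of finite-dimensional `K`-vector spaces. -/
structure PMFunctor (K : Type) [Field K] (P : Type) [PartialOrder P] where
  obj : (M : PersistenceModule K P) → M.pfd → Type
  [objAcg : ∀ M hM, AddCommGroup (obj M hM)]
  [objMod : ∀ M hM, Module K (obj M hM)]
  objFin : ∀ M hM, FiniteDimensional K (obj M hM)
  fmap : {M N : PersistenceModule K P} → (hM : M.pfd) → (hN : N.pfd) →
      PersistenceHom M N → (obj M hM →ₗ[K] obj N hN)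
  fmap_id : ∀ (M : PersistenceModule K P) (hM : M.pfd),
      fmap hM hM (PersistenceHom.id M) = LinearMap.id
  fmap_comp : ∀ {M N L : PersistenceModule K P} (hM : M.pfd) (hN : N.pfd) (hL : L.pfd)
      (f : PersistenceHom M N) (g : PersistenceHom N L),
      fmap hM hL (g.comp f) = (fmap hN hL g).comp (fmap hM hN f)

attribute [instance] PMFunctor.objAcg PMFunctor.objMod

end Functors

section FRank

variable {P : Type} [AddCommGroup P] [PartialOrder P] [IsOrderedAddMonoid P]

/-- The `F`-rank invariant `rk_{M,F}(x,y)`: for `x ≤ y` it is the rank of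
`F(sh^{y-x}_{M[x]}) : F(M[x]) → F(M[x][y-x])`, and `∞` otherwise. -/
noncomputable def frk (F : PMFunctor K P) (M : PersistenceModule K P) (hM : M.pfd)
    (x y : P) : ℕ∞ :=
  if h : x ≤ y then
    (lrank (F.fmap (hM.shift x) ((hM.shift x).shift (y - x))
      (shMor (M.shift x) (y - x) (sub_nonneg.mpr h))) : ℕ∞)
  else ⊤

end FRank

section RankFunctions

variable {P : Type} [PartialOrder P]

/-- A rank function: `∞` off the order relation, and "erosion monotone". -/
def IsRankFunction (F : P → P → ℕ∞) : Prop :=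
  (∀ x y : P, ¬ x ≤ y → F x y = ⊤) ∧
  ∀ x x' y' y : P, x ≤ x' → x' ≤ y' → y' ≤ y → F x y ≤ F x' y'

end RankFunctions

section Distances

variable {R : Type} [CommRing R] [LinearOrder R] [IsStrictOrderedRing R] {d : ℕ}

/-- The interleaving distance between two persistence modules over `Fin d → R`,
computed in `ℝ≥0∞` via the embedding `toR : R → ℝ`. -/
noncomputable def interleavingDist (toR : R → ℝ)
    (M N : PersistenceModule K (Fin d → R)) : ℝ≥0∞ :=
  sInf {c : ℝ≥0∞ | ∃ (ε : R) (hε : 0 ≤ ε),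
    IsInterleaving M N (fun _ => ε) (fun _ => hε) ∧ c = ENNReal.ofReal (toR ε)}

/-- The erosion distance between two `ℕ∞`-valued functions on pairs of points. -/
noncomputable def erosionDist (toR : R → ℝ)
    (F G : (Fin d → R) → (Fin d → R) → ℕ∞) : ℝ≥0∞ :=
  sInf {c : ℝ≥0∞ | ∃ ε : R, 0 ≤ ε ∧
    (∀ x y : Fin d → R, x ≤ y →
      F (x - fun _ => ε) (y + fun _ => ε) ≤ G x y ∧
      G (x - fun _ => ε) (y + fun _ => ε) ≤ F x y) ∧
    c = ENNReal.ofReal (toR ε)}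

/-- The persistence landscape `λ_F(k,x)` of a rank function `F`. -/
noncomputable def landscape (toR : R → ℝ)
    (F : (Fin d → R) → (Fin d → R) → ℕ∞) (k : ℕ) (x : Fin d → R) : ℝ≥0∞ :=
  sSup {c : ℝ≥0∞ | ∃ ε : ℝ, 0 < ε ∧
    (∀ h : Fin d → R, (∀ i, |toR (h i)| ≤ ε) → (k : ℕ∞) ≤ F (x - h) (x + h)) ∧
    c = ENNReal.ofReal ε}

/-- The sup-distance `‖λ_F - λ_G‖_∞` between the landscapes of `F` and `G`. -/
noncomputable def landscapeDist (toR : R → ℝ)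
    (F G : (Fin d → R) → (Fin d → R) → ℕ∞) : ℝ≥0∞ :=
  ⨆ (k : ℕ) (x : Fin d → R),
    max (landscape toR F k x - landscape toR G k x)
      (landscape toR G k x - landscape toR F k x)

end Distances

section Zigzag

variable {P : Type} [PartialOrder P] {n : ℕ}

/-- The orientation relation of a zigzag: for each `k < n - 1`, exactly one
of the covering pairs `(k, k+1)` (if `ω k = true`) or `(k+1, k)` (if `ω k = false`),
and no other pairs. -/
def zigzagStep (n : ℕ) (ω : ℕ → Bool) (i j : Fin n) : Prop :=
  ((j : ℕ) = (i : ℕ) + 1 ∧ ω (i : ℕ) = true) ∨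
  ((i : ℕ) = (j : ℕ) + 1 ∧ ω (j : ℕ) = false)

/-- `P` is a zigzag poset on `{0, …, n-1}` via the labeling `e`, with orientation `ω`:
the order of `P` is the reflexive-transitive closure of the zigzag relation. -/
def IsZigzag (n : ℕ) (ω : ℕ → Bool) (e : P ≃ Fin n) : Prop :=
  ∀ a b : P, a ≤ b ↔ Relation.ReflTransGen (zigzagStep n ω) (e a) (e b)

/-- The subposet `{i, …, j}` of a labeled poset. -/
def zzInterval (e : P ≃ Fin n) (i j : ℕ) : Set P :=
  {p | i ≤ (e p : ℕ) ∧ (e p : ℕ) ≤ j}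

/-- `S⁺_{ij}`: the minimal elements of the subposet `{i, …, j}`. -/
def zzMin (e : P ≃ Fin n) (i j : ℕ) : Set P :=
  {p | p ∈ zzInterval e i j ∧ ∀ q ∈ zzInterval e i j, q ≤ p → q = p}

/-- `S⁻_{ij}`: the maximal elements of the subposet `{i, …, j}`. -/
def zzMax (e : P ≃ Fin n) (i j : ℕ) : Set P :=
  {p | p ∈ zzInterval e i j ∧ ∀ q ∈ zzInterval e i j, p ≤ q → q = p}

/-- The map `T_{M,S_{ij}} : ⊕_{x ∈ S⁺_{ij}} M_x → ⊕_{y ∈ S⁻_{ij}} M_y`, whose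
`(y,x)`-component is `M_{yx}` if `x ≤ y` and `0` otherwise. -/
noncomputable def Tij (e : P ≃ Fin n) (M : PersistenceModule K P) (i j : ℕ) :
    ((x : zzMin e i j) → M.V x.1) →ₗ[K] ((y : zzMax e i j) → M.V y.1) :=
  letI : Fintype P := Fintype.ofEquiv (Fin n) e.symm
  LinearMap.pi fun y => ∑ x : zzMin e i j,
    if h : x.1 ≤ y.1 then (M.map h).comp (LinearMap.proj x) else 0

end Zigzag

section Jordan

/-- The underlying space of the `K[t]/(t^n)`-module `⊕_{i=1}^n (K[t]/(t^i))^{a_i}`,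
where the summand of dimension `(i : Fin n) + 1` occurs with multiplicity `a i`. -/
abbrev jordanSpace (K : Type) (n : ℕ) (a : Fin n → ℕ) : Type :=
  (i : Fin n) → Fin (a i) → Fin ((i : ℕ) + 1) → K

/-- The nilpotent Jordan block of size `m`, i.e. multiplication by `t` on
`K[t]/(t^m)` in the basis `1, t, …, t^{m-1}`. -/
noncomputable def jordanBlock (K : Type) [Field K] (m : ℕ) :
    (Fin m → K) →ₗ[K] (Fin m → K) :=
  LinearMap.pi fun k =>
    if _ : (k : ℕ) = 0 then 0
    else LinearMap.proj (⟨(k : ℕ) - 1, Nat.lt_of_le_of_lt (Nat.sub_le _ _) k.isLt⟩ : Fin m)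

/-- Multiplication by `t` on `⊕_{i=1}^n (K[t]/(t^i))^{a_i}`. -/
noncomputable def jordanOp (K : Type) [Field K] (n : ℕ) (a : Fin n → ℕ) :
    jordanSpace K n a →ₗ[K] jordanSpace K n a :=
  LinearMap.pi fun i => LinearMap.pi fun j =>
    (jordanBlock K ((i : ℕ) + 1)).comp
      ((LinearMap.proj j :
          (Fin (a i) → Fin ((i : ℕ) + 1) → K) →ₗ[K] (Fin ((i : ℕ) + 1) → K)).comp
        (LinearMap.proj i :
          jordanSpace K n a →ₗ[K] (Fin (a i) → Fin ((i : ℕ) + 1) → K)))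

/-- Two pairs (vector space, endomorphism) are isomorphic as `K[t]`-modules. -/
def OpIso {K : Type} [Field K] {V W : Type} [AddCommGroup V] [Module K V]
    [AddCommGroup W] [Module K W] (T : V →ₗ[K] V) (U : W →ₗ[K] W) : Prop :=
  ∃ e : V ≃ₗ[K] W, ∀ v, e (T v) = U (e v)

/-- The total space `⊕_{k=1}^n I_k` of the interval representation `I_{[a,b]}`
of the equioriented `A_n` quiver (vertices are `1`-based: vertex `k+1` for `k : Fin n`). -/
abbrev intervalSpace (K : Type) (n a b : ℕ) : Type :=
  {k : Fin n // a ≤ (k : ℕ) + 1 ∧ (k : ℕ) + 1 ≤ b} → K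

/-- The operator `T` on `⊕_k I_k` given by the arrow maps of `I_{[a,b]}`. -/
noncomputable def intervalShift (K : Type) [Field K] (n a b : ℕ) :
    intervalSpace K n a b →ₗ[K] intervalSpace K n a b :=
  LinearMap.pi fun k =>
    if h : a ≤ (k.1 : ℕ) then
      LinearMap.proj
        (⟨⟨(k.1 : ℕ) - 1, Nat.lt_of_le_of_lt (Nat.sub_le _ _) k.1.isLt⟩,
          ⟨by have h2 := k.2.2; show a ≤ (k.1 : ℕ) - 1 + 1; omega,
           by have h2 := k.2.2; show (k.1 : ℕ) - 1 + 1 ≤ b; omega⟩⟩ :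
          {k : Fin n // a ≤ (k : ℕ) + 1 ∧ (k : ℕ) + 1 ≤ b})
    else 0

end Jordan

section Grid

variable {d : ℕ}

/-- The grid `[0,ℓ₁] × … × [0,ℓ_d] ⊆ ℤ^d`. -/
def gridSet (d : ℕ) (ℓ : Fin d → ℕ) : Set (Fin d → ℤ) :=
  {x | ∀ k, 0 ≤ x k ∧ x k ≤ (ℓ k : ℤ)}

/-- The norm slice `S_{i+1} = {x ∈ G : x₁ + … + x_d = i}` of the grid. -/
noncomputable def gridSlice (d : ℕ) (ℓ : Fin d → ℕ) (i : ℕ) : Finset (Fin d → ℤ) :=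
  (Fintype.piFinset fun k => Finset.Icc (0 : ℤ) (ℓ k)).filter
    fun x => (∑ k, x k) = (i : ℤ)

/-- A persistence module over `ℤ^d` is supported on `G` if it vanishes off `G`. -/
def supportedOn (M : PersistenceModule K (Fin d → ℤ)) (G : Set (Fin d → ℤ)) : Prop :=
  ∀ z, z ∉ G → Subsingleton (M.V z)

end Grid

section AnQuiver

variable {P : Type} [PartialOrder P] {n : ℕ}

/-- The space `M|_S(k) = ⊕_{x ∈ S_k} M_x` at the `k`-th vertex of the `A_n` quiver. -/
abbrev sliceLevel (M : PersistenceModule K P) (S : Fin n → Finset P) (k : Fin n) :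
    Type :=
  (x : {a // a ∈ S k}) → M.V x.1

/-- The arrow map `T_{M,S}(k) : M|_S(k) → M|_S(k+1)`, whose `(y,x)`-component
is `M_{yx}` if `x ≤ y` and `0` otherwise. -/
noncomputable def sliceArrow (M : PersistenceModule K P) (S : Fin n → Finset P)
    (k : Fin n) (h : (k : ℕ) + 1 < n) :
    sliceLevel M S k →ₗ[K] sliceLevel M S ⟨(k : ℕ) + 1, h⟩ :=
  LinearMap.pi fun y => ∑ x : {a // a ∈ S k},
    if hxy : x.1 ≤ y.1 then (M.map hxy).comp (LinearMap.proj x) else 0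

/-- The value at vertex `k` (with `1`-based label `k+1`) of the direct sum of the
interval representations `I_{[(ind j).1, (ind j).2]}`, `j : Fin m`, of the
equioriented `A_n` quiver. -/
abbrev sumIntSpace (K : Type) {m : ℕ} (ind : Fin m → ℕ × ℕ) {n : ℕ} (k : Fin n) :
    Type :=
  (j : Fin m) → PLift ((ind j).1 ≤ (k : ℕ) + 1 ∧ (k : ℕ) + 1 ≤ (ind j).2) → K

/-- The arrow map from vertex `k` to vertex `k+1` of the direct sum of interval
representations: the identity on each interval passing through both vertices. -/
noncomputable def sumIntArrow (K : Type) [Field K] {m : ℕ} (ind : Fin m → ℕ × ℕ)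
    {n : ℕ} (k : Fin n) (h : (k : ℕ) + 1 < n) :
    sumIntSpace K ind k →ₗ[K] sumIntSpace K ind (⟨(k : ℕ) + 1, h⟩ : Fin n) :=
  LinearMap.pi fun j => LinearMap.pi fun _ =>
    if hk : (ind j).1 ≤ (k : ℕ) + 1 ∧ (k : ℕ) + 1 ≤ (ind j).2 then
      (LinearMap.proj (PLift.up hk) :
          (PLift ((ind j).1 ≤ (k : ℕ) + 1 ∧ (k : ℕ) + 1 ≤ (ind j).2) → K) →ₗ[K] K).comp
        (LinearMap.proj j : sumIntSpace K ind k →ₗ[K]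
          (PLift ((ind j).1 ≤ (k : ℕ) + 1 ∧ (k : ℕ) + 1 ≤ (ind j).2) → K))
    else 0

end AnQuiver

namespace PersistenceModule

variable {P : Type} [PartialOrder P]

@[simp]
theorem map_map (M : PersistenceModule K P) {x y z : P} (hxy : x ≤ y) (hyz : y ≤ z)
    (v : M.V x) : M.map hyz (M.map hxy v) = M.map (hxy.trans hyz) v :=
  LinearMap.congr_fun (M.map_comp hxy hyz) v

end PersistenceModule

namespace PersistenceHom

variable {P : Type} [PartialOrder P] {M N : PersistenceModule K P}

@[ext]
theorem ext {f g : PersistenceHom M N} (h : ∀ x, f.app x = g.app x) : f = g := by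
  cases f
  cases g
  congr
  exact funext h

@[simp]
theorem app_map (f : PersistenceHom M N) {x y : P} (h : x ≤ y) (v : M.V x) :
    f.app y (M.map h v) = N.map h (f.app x v) :=
  LinearMap.congr_fun (f.naturality h) v

end PersistenceHom

section Slices

variable {P : Type} [PartialOrder P] {n : ℕ} {M N L : PersistenceModule K P}
  (S : Fin n → Finset P)

theorem sliceHom_comp (g : PersistenceHom N L) (f : PersistenceHom M N) :
    sliceHom (g.comp f) S = (sliceHom g S).comp (sliceHom f S) :=
  rfl

theorem TMap_apply (v : sliceSpace M S) (p : SliceIdx S) :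
    TMap M S v p = ∑ q : SliceIdx S,
      if h : (q.1 : ℕ) + 1 = (p.1 : ℕ) ∧ q.2.1 ≤ p.2.1 then M.map h.2 (v q) else 0 := by
  simp only [TMap, LinearMap.pi_apply, LinearMap.sum_apply]
  refine Finset.sum_congr rfl fun q _ => ?_
  split <;> rfl

@[simp]
theorem sliceHom_apply (f : PersistenceHom M N) (v : sliceSpace M S) (p : SliceIdx S) :
    sliceHom f S v p = f.app p.2.1 (v p) :=
  rfl

theorem sliceHom_comp_TMap (f : PersistenceHom M N) :
    (sliceHom f S).comp (TMap M S) = (TMap N S).comp (sliceHom f S) := by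
  refine LinearMap.ext fun v => funext fun p => ?_
  simp only [LinearMap.comp_apply, sliceHom_apply, TMap_apply, map_sum]
  refine Finset.sum_congr rfl fun q _ => ?_
  split_ifs <;> simp

theorem sliceHom_comp_TMap_pow (f : PersistenceHom M N) (i : ℕ) :
    (sliceHom f S).comp (TMap M S ^ i) = (TMap N S ^ i).comp (sliceHom f S) := by
  induction i with
  | zero => rfl
  | succ i ih =>
    rw [pow_succ, pow_succ, Module.End.mul_eq_comp, Module.End.mul_eq_comp,
      ← LinearMap.comp_assoc, ih, LinearMap.comp_assoc, sliceHom_comp_TMap,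
      ← LinearMap.comp_assoc]

theorem map_range_TMap_pow_le (f : PersistenceHom M N) (i : ℕ) :
    (LinearMap.range (TMap M S ^ i)).map (sliceHom f S) ≤ LinearMap.range (TMap N S ^ i) := by
  rw [← LinearMap.range_comp, sliceHom_comp_TMap_pow]
  exact LinearMap.range_comp_le_range _ _

theorem finrank_map_range_TMap_pow_le {M' N' : PersistenceModule K P} (hN : N.pfd)
    (f : PersistenceHom M N) (h : PersistenceHom N N') (g : PersistenceHom N' M') (i : ℕ) :
    Module.finrank K ((LinearMap.range (TMap M S ^ i)).map (sliceHom (g.comp (h.comp f)) S))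
      ≤ Module.finrank K ((LinearMap.range (TMap N S ^ i)).map (sliceHom h S)) := by
  have : ∀ x, FiniteDimensional K (N.V x) := hN
  rw [sliceHom_comp, sliceHom_comp, Submodule.map_comp, Submodule.map_comp]
  calc _ ≤ Module.finrank K
          (((LinearMap.range (TMap N S ^ i)).map (sliceHom h S)).map (sliceHom g S)) :=
        Submodule.finrank_mono
          (Submodule.map_mono (Submodule.map_mono (map_range_TMap_pow_le S f i)))
    _ ≤ _ := Submodule.finrank_map_le _ _

end Slices

section Shifts

variable {P : Type} [AddCommGroup P] [PartialOrder P] [IsOrderedAddMonoid P]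

@[simp]
theorem PersistenceModule.shift_map (M : PersistenceModule K P) (a : P) {x y : P}
    (h : x ≤ y) : (M.shift a).map h = M.map (add_le_add_right h a) :=
  rfl

def PersistenceModule.shiftLe (M : PersistenceModule K P) {a b : P} (h : a ≤ b) :
    PersistenceHom (M.shift a) (M.shift b) where
  app z := M.map (add_le_add_left h z)
  naturality _ := LinearMap.ext fun (v : M.V (a + _)) => by
    show M.map _ (M.map _ v) = M.map _ (M.map _ v)
    simp only [PersistenceModule.map_map]

theorem transMap_eq_sliceHom_shiftLe {n : ℕ} (M : PersistenceModule K P)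
    (S : Fin n → Finset P) {a b : P} (h : a ≤ b) :
    transMap M S h = sliceHom (M.shiftLe h) S :=
  rfl

variable {M N : PersistenceModule K P}

def PersistenceHom.shiftTo {ε a c : P} (f : PersistenceHom M (N.shift ε)) (h : ε + a ≤ c) :
    PersistenceHom (M.shift a) (N.shift c) where
  app z := (N.map ((add_assoc ε a z).symm.le.trans (add_le_add_left h z))).comp (f.app (a + z))
  naturality {x y} _ := LinearMap.ext fun (v : M.V (a + _)) => by
    show N.map _ (f.app (a + y) (M.map _ v)) = N.map _ (N.map _ (f.app (a + x) v))
    rw [PersistenceHom.app_map, PersistenceModule.shift_map]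
    -- `erw`: `(N.shift ε).V z` is `N.V (ε + z)` only after unfolding `shift`
    erw [PersistenceModule.map_map, PersistenceModule.map_map]

theorem IsInterleavingPair.symm {ε : P} {hε : 0 ≤ ε} {f : PersistenceHom M (N.shift ε)}
    {g : PersistenceHom N (M.shift ε)} (hfg : IsInterleavingPair ε hε f g) :
    IsInterleavingPair ε hε g f :=
  ⟨hfg.2, hfg.1⟩

theorem IsInterleavingPair.app_app {ε : P} {hε : 0 ≤ ε} {f : PersistenceHom M (N.shift ε)}
    {g : PersistenceHom N (M.shift ε)} (hfg : IsInterleavingPair ε hε f g) (z : P)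
    (v : M.V z) :
    g.app (ε + z) (f.app z v) = M.map ((le_add_of_nonneg_left hε).trans
      (add_le_add_right (le_add_of_nonneg_left hε) ε)) v :=
  LinearMap.congr_fun (hfg.1 z) v

theorem IsInterleavingPair.shiftLe_eq {ε : P} {hε : 0 ≤ ε} {f : PersistenceHom M (N.shift ε)}
    {g : PersistenceHom N (M.shift ε)} (hfg : IsInterleavingPair ε hε f g) {a b c d : P}
    (hab : a ≤ b) (hac : ε + a ≤ c) (hcd : c ≤ d) (hdb : ε + d ≤ b) :
    M.shiftLe hab = (g.shiftTo hdb).comp ((N.shiftLe hcd).comp (f.shiftTo hac)) := by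
  refine PersistenceHom.ext fun z => LinearMap.ext fun (v : M.V (a + z)) => ?_
  show M.map _ v = M.map _ (g.app (d + z) (N.map _ (N.map _ (f.app (a + z) v))))
  erw [PersistenceModule.map_map, PersistenceHom.app_map, PersistenceModule.shift_map,
    hfg.app_app, PersistenceModule.map_map, PersistenceModule.map_map]

end Shifts

section JordanRank

variable {P : Type} [AddCommGroup P] [PartialOrder P] [IsOrderedAddMonoid P] {n : ℕ}
  {M N : PersistenceModule K P}

theorem jordanRk_of_not_le (M : PersistenceModule K P) (S : Fin n → Finset P) (i : ℕ)
    {x y : P} (h : ¬ x ≤ y) : jordanRk M S i x y = ⊤ :=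
  dif_neg h

theorem IsInterleavingPair.jordanRk_le {ε : P} {hε : 0 ≤ ε}
    {f : PersistenceHom M (N.shift ε)} {g : PersistenceHom N (M.shift ε)}
    (hfg : IsInterleavingPair ε hε f g) (hN : N.pfd) (S : Fin n → Finset P) (i : ℕ)
    {x y : P} (hxy : x ≤ y) :
    jordanRk M S i (x - ε) (y + ε) ≤ jordanRk N S i x y := by
  have hxy' : x - ε ≤ y + ε :=
    (sub_le_self x hε).trans (hxy.trans (le_add_of_nonneg_right hε))
  rw [jordanRk, jordanRk, dif_pos hxy', dif_pos hxy, Nat.cast_le,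
    transMap_eq_sliceHom_shiftLe, transMap_eq_sliceHom_shiftLe,
    hfg.shiftLe_eq hxy' (add_sub_cancel ε x).le hxy (add_comm ε y).le]
  exact finrank_map_range_TMap_pow_le S (hN.shift x) _ _ _ i

end JordanRank

section Distances

variable {d : ℕ}

theorem le_apply_sub_add_of_erosion {R : Type} [AddCommGroup R] [LE R] {toR : R → ℝ}
    {F G : (Fin d → R) → (Fin d → R) → ℕ∞}
    (hadd : ∀ a b : R, toR (a + b) = toR a + toR b) (hpos : ∀ a : R, 0 ≤ a → 0 ≤ toR a)
    (hG : ∀ x y, ¬ x ≤ y → G x y = ⊤) {ε : R} (hε : 0 ≤ ε)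
    (hFG : ∀ x y, x ≤ y → F (x - fun _ => ε) (y + fun _ => ε) ≤ G x y)
    {k : ℕ∞} {x : Fin d → R} {δ : ℝ}
    (hF : ∀ h : Fin d → R, (∀ j, |toR (h j)| ≤ δ) → k ≤ F (x - h) (x + h))
    (h : Fin d → R) (hh : ∀ j, |toR (h j)| ≤ δ - toR ε) :
    k ≤ G (x - h) (x + h) := by
  by_cases hcmp : x - h ≤ x + h
  · have hbox : ∀ j, |toR ((h + fun _ => ε : Fin d → R) j)| ≤ δ := fun j =>
      calc |toR (h j + ε)| = |toR (h j) + toR ε| := by rw [hadd]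
        _ ≤ |toR (h j)| + toR ε := (abs_add_le _ _).trans_eq (by rw [abs_of_nonneg (hpos ε hε)])
        _ ≤ δ := by linarith [hh j]
    calc k ≤ F (x - (h + fun _ => ε)) (x + (h + fun _ => ε)) := hF _ hbox
      _ = F ((x - h) - fun _ => ε) ((x + h) + fun _ => ε) := by
        rw [sub_add_eq_sub_sub, add_assoc]
      _ ≤ G (x - h) (x + h) := hFG _ _ hcmp
  · rw [hG _ _ hcmp]
    exact le_top

variable {R : Type} [CommRing R] [LinearOrder R] {toR : R → ℝ}

theorem landscape_le_add_of_erosion {F G : (Fin d → R) → (Fin d → R) → ℕ∞}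
    (hadd : ∀ a b : R, toR (a + b) = toR a + toR b) (hpos : ∀ a : R, 0 ≤ a → 0 ≤ toR a)
    (hG : ∀ x y, ¬ x ≤ y → G x y = ⊤) {ε : R} (hε : 0 ≤ ε)
    (hFG : ∀ x y, x ≤ y → F (x - fun _ => ε) (y + fun _ => ε) ≤ G x y)
    (k : ℕ) (x : Fin d → R) :
    landscape toR F k x ≤ landscape toR G k x + ENNReal.ofReal (toR ε) := by
  refine sSup_le ?_
  rintro _ ⟨δ, hδ, hF, rfl⟩
  rcases le_or_gt δ (toR ε) with hle | hlt
  · exact (ENNReal.ofReal_le_ofReal hle).trans le_add_self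
  · calc ENNReal.ofReal δ = ENNReal.ofReal (δ - toR ε) + ENNReal.ofReal (toR ε) := by
          rw [← ENNReal.ofReal_add (by linarith) (hpos ε hε), sub_add_cancel]
      _ ≤ landscape toR G k x + ENNReal.ofReal (toR ε) := by
        gcongr
        exact le_sSup
          ⟨δ - toR ε, by linarith, le_apply_sub_add_of_erosion hadd hpos hG hε hFG hF, rfl⟩

theorem landscapeDist_le_erosionDist {F G : (Fin d → R) → (Fin d → R) → ℕ∞}
    (hadd : ∀ a b : R, toR (a + b) = toR a + toR b) (hpos : ∀ a : R, 0 ≤ a → 0 ≤ toR a)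
    (hF : ∀ x y, ¬ x ≤ y → F x y = ⊤) (hG : ∀ x y, ¬ x ≤ y → G x y = ⊤) :
    landscapeDist toR F G ≤ erosionDist toR F G := by
  refine le_sInf ?_
  rintro _ ⟨ε, hε, hFG, rfl⟩
  refine iSup₂_le fun k x => max_le ?_ ?_ <;> rw [tsub_le_iff_left]
  · exact landscape_le_add_of_erosion hadd hpos hG hε (fun x y hxy => (hFG x y hxy).1) k x
  · exact landscape_le_add_of_erosion hadd hpos hF hε (fun x y hxy => (hFG x y hxy).2) k x

variable [IsStrictOrderedRing R]

theorem erosionDist_jordanRk_le_interleavingDist {n : ℕ} (S : Fin n → Finset (Fin d → R))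
    {M N : PersistenceModule K (Fin d → R)} (hM : M.pfd) (hN : N.pfd) (i : ℕ) :
    erosionDist toR (jordanRk M S i) (jordanRk N S i) ≤ interleavingDist toR M N := by
  refine sInf_le_sInf ?_
  rintro _ ⟨ε, hε, ⟨f, g, hfg⟩, rfl⟩
  exact ⟨ε, hε, fun x y hxy =>
    ⟨hfg.jordanRk_le hN S i hxy, hfg.symm.jordanRk_le hM S i hxy⟩, rfl⟩

theorem jordanRk_landscapeDist_le_erosionDist_le_interleavingDist
    (hadd : ∀ a b : R, toR (a + b) = toR a + toR b) (hpos : ∀ a : R, 0 ≤ a → 0 ≤ toR a)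
    {n : ℕ} (S : Fin n → Finset (Fin d → R)) {M N : PersistenceModule K (Fin d → R)}
    (hM : M.pfd) (hN : N.pfd) :
    (⨆ i : Fin n, landscapeDist toR (jordanRk M S (i : ℕ)) (jordanRk N S (i : ℕ))) ≤
        (⨆ i : Fin n, erosionDist toR (jordanRk M S (i : ℕ)) (jordanRk N S (i : ℕ))) ∧
      (⨆ i : Fin n, erosionDist toR (jordanRk M S (i : ℕ)) (jordanRk N S (i : ℕ))) ≤
        interleavingDist toR M N :=
  ⟨iSup_mono fun _ => landscapeDist_le_erosionDist hadd hpos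
      (fun _ _ => jordanRk_of_not_le M S _) (fun _ _ => jordanRk_of_not_le N S _),
    iSup_le fun _ => erosionDist_jordanRk_le_interleavingDist S hM hN _⟩

end Distances

theorem statement2_general (K : Type) [Field K] (d n : ℕ) :
    (∀ S : Fin n → Finset (Fin d → ℤ),
      (∀ i j : Fin n, i ≠ j → Disjoint (S i) (S j)) →
      ∀ M N : PersistenceModule K (Fin d → ℤ), M.pfd → N.pfd →
        (⨆ i : Fin n, landscapeDist (fun z : ℤ => (z : ℝ))
            (jordanRk M S (i : ℕ)) (jordanRk N S (i : ℕ))) ≤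
          (⨆ i : Fin n, erosionDist (fun z : ℤ => (z : ℝ))
            (jordanRk M S (i : ℕ)) (jordanRk N S (i : ℕ))) ∧
        (⨆ i : Fin n, erosionDist (fun z : ℤ => (z : ℝ))
            (jordanRk M S (i : ℕ)) (jordanRk N S (i : ℕ))) ≤
          interleavingDist (fun z : ℤ => (z : ℝ)) M N) ∧
    (∀ S : Fin n → Finset (Fin d → ℝ),
      (∀ i j : Fin n, i ≠ j → Disjoint (S i) (S j)) →
      ∀ M N : PersistenceModule K (Fin d → ℝ), M.pfd → N.pfd →
        (⨆ i : Fin n, landscapeDist (id : ℝ → ℝ)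
            (jordanRk M S (i : ℕ)) (jordanRk N S (i : ℕ))) ≤
          (⨆ i : Fin n, erosionDist (id : ℝ → ℝ)
            (jordanRk M S (i : ℕ)) (jordanRk N S (i : ℕ))) ∧
        (⨆ i : Fin n, erosionDist (id : ℝ → ℝ)
            (jordanRk M S (i : ℕ)) (jordanRk N S (i : ℕ))) ≤
          interleavingDist (id : ℝ → ℝ) M N) :=
  ⟨fun S _ _ _ hM hN => jordanRk_landscapeDist_le_erosionDist_le_interleavingDist
      (fun _ _ => Int.cast_add _ _) (fun _ => Int.cast_nonneg) S hM hN,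
    fun S _ _ _ hM hN => jordanRk_landscapeDist_le_erosionDist_le_interleavingDist
      (fun _ _ => rfl) (fun _ => id) S hM hN⟩

/-- `d_L(M,N)_S ≤ d_E(M,N)_S ≤ d_I(M,N)` over `ℤ^d` and over `ℝ^d`. -/
theorem statement2 (K : Type) [Field K] (d n : ℕ) (hn : 2 ≤ n) :
    (∀ S : Fin n → Finset (Fin d → ℤ),
      (∀ i j : Fin n, i ≠ j → Disjoint (S i) (S j)) →
      ∀ M N : PersistenceModule K (Fin d → ℤ), M.pfd → N.pfd →
        (⨆ i : Fin n, landscapeDist (fun z : ℤ => (z : ℝ))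
            (jordanRk M S (i : ℕ)) (jordanRk N S (i : ℕ))) ≤
          (⨆ i : Fin n, erosionDist (fun z : ℤ => (z : ℝ))
            (jordanRk M S (i : ℕ)) (jordanRk N S (i : ℕ))) ∧
        (⨆ i : Fin n, erosionDist (fun z : ℤ => (z : ℝ))
            (jordanRk M S (i : ℕ)) (jordanRk N S (i : ℕ))) ≤
          interleavingDist (fun z : ℤ => (z : ℝ)) M N) ∧
    (∀ S : Fin n → Finset (Fin d → ℝ),
      (∀ i j : Fin n, i ≠ j → Disjoint (S i) (S j)) →
      ∀ M N : PersistenceModule K (Fin d → ℝ), M.pfd → N.pfd →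
        (⨆ i : Fin n, landscapeDist (id : ℝ → ℝ)
            (jordanRk M S (i : ℕ)) (jordanRk N S (i : ℕ))) ≤
          (⨆ i : Fin n, erosionDist (id : ℝ → ℝ)
            (jordanRk M S (i : ℕ)) (jordanRk N S (i : ℕ))) ∧
        (⨆ i : Fin n, erosionDist (id : ℝ → ℝ)
            (jordanRk M S (i : ℕ)) (jordanRk N S (i : ℕ))) ≤
          interleavingDist (id : ℝ → ℝ) M N) :=
  statement2_general K d n

end
end

section
/- Let K be a field, d ≥ 1, G := [0,ℓ_1] × … × [0,ℓ_d] ⊆ ℤ^d a finite grid, n := ℓ_1 + … + ℓ_d + 1, and S := (S_1,…,S_n) the norm slicing S_i := {x ∈ G : x_1 + … + x_d = i−1}. Let M and N be pointwise finite-dimensional persistence modules over ℤ^d supported on G. Then rk^0_{M,S}(x,y) = rk^0_{N,S}(x,y) for all x ≤ y in ℤ^d if and only if rk_M(x,y) = rk_N(x,y) for all x ≤ y in ℤ^d. -/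
open scoped Classical ENNReal

noncomputable section

variable {K : Type} [Field K]

/-!
As `T⁰ = id`, the degree-`0` Jordan rank `rk⁰_{M,S}(x, y)` is the sum of the ranks
`rk_M(x + z, y + z)` over `z ∈ S₁ ∪ … ∪ Sₙ = G`. The grid `G` consists of nonnegative vectors and
contains `0`, so this sum is `rk_M(x, y)` plus ranks at pairs whose source lies strictly above `x`,
while `rk_M(x, y) = 0` for `x ∉ G`. Downward induction over the finite set `G` therefore recovers
`rk_M` from `rk⁰_{M,S}`, and conversely `rk⁰_{M,S}` is visibly determined by `rk_M`.
-/

section Translates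

variable {P α : Type*} [AddCommMonoid P] [PartialOrder P] [IsOrderedCancelAddMonoid P]
  [AddCancelCommMonoid α]

theorem card_filter_add_lt_lt {F : Finset P} {a z : P} (hz : 0 < z) (haz : a + z ∈ F) :
    (F.filter (a + z < ·)).card < (F.filter (a < ·)).card := by
  have ha : a < a + z := lt_add_of_pos_right a hz
  refine Finset.card_lt_card ((Finset.ssubset_iff_of_subset ?_).mpr ⟨a + z, ?_, ?_⟩)
  · exact Finset.monotone_filter_right F fun _ _ => ha.trans
  · exact Finset.mem_filter.mpr ⟨haz, ha⟩
  · simp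

theorem eq_of_sum_translates_eq {G F : Finset P} (hG₀ : 0 ∈ G) (hG : ∀ z ∈ G, 0 ≤ z)
    {f g : P → P → α} (hF : ∀ a ∉ F, ∀ b, f a b = g a b)
    (hsum : ∀ a b, ∑ z ∈ G, f (a + z) (b + z) = ∑ z ∈ G, g (a + z) (b + z)) : f = g := by
  funext a b
  induction hm : (F.filter (a < ·)).card using Nat.strong_induction_on generalizing a b with
  | _ m ih =>
    have htail : ∑ z ∈ G.erase 0, f (a + z) (b + z) = ∑ z ∈ G.erase 0, g (a + z) (b + z) := by
      refine Finset.sum_congr rfl fun z hz => ?_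
      obtain ⟨hz₀, hzG⟩ := Finset.mem_erase.mp hz
      by_cases haz : a + z ∈ F
      · exact ih _ (hm ▸ card_filter_add_lt_lt ((hG z hzG).lt_of_ne' hz₀) haz) _ _ rfl
      · exact hF _ haz _
    have h := hsum a b
    rw [← Finset.add_sum_erase _ _ hG₀, ← Finset.add_sum_erase _ _ hG₀, htail] at h
    simpa using add_right_cancel h

end Translates

section Rank

theorem lrank_eq_zero_of_subsingleton {V W : Type} [AddCommGroup V] [Module K V]
    [AddCommGroup W] [Module K W] [Subsingleton V] (f : V →ₗ[K] W) : lrank f = 0 := by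
  rw [lrank, Subsingleton.elim f 0, LinearMap.range_zero, finrank_bot]

def Submodule.piUnivEquiv {ι : Type} {W : ι → Type} [∀ i, AddCommGroup (W i)]
    [∀ i, Module K (W i)] (p : ∀ i, Submodule K (W i)) :
    Submodule.pi Set.univ p ≃ₗ[K] ∀ i, p i where
  toFun v i := ⟨v.1 i, v.2 i trivial⟩
  map_add' _ _ := rfl
  map_smul' _ _ := rfl
  invFun u := ⟨fun i => (u i).1, fun i _ => (u i).2⟩
  left_inv _ := rfl
  right_inv _ := rfl

theorem LinearMap.range_piMap {ι : Type} {V W : ι → Type}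
    [∀ i, AddCommGroup (V i)] [∀ i, Module K (V i)]
    [∀ i, AddCommGroup (W i)] [∀ i, Module K (W i)] (f : ∀ i, V i →ₗ[K] W i) :
    LinearMap.range (LinearMap.piMap f) =
      Submodule.pi Set.univ fun i => LinearMap.range (f i) := by
  ext w
  simp only [LinearMap.mem_range, LinearMap.coe_piMap, Submodule.mem_pi, Set.mem_univ,
    forall_const]
  constructor
  · rintro ⟨v, rfl⟩ i
    exact ⟨v i, rfl⟩
  · intro hw
    choose v hv using hw
    exact ⟨v, funext hv⟩

theorem lrank_piMap {ι : Type} [Fintype ι] {V W : ι → Type}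
    [∀ i, AddCommGroup (V i)] [∀ i, Module K (V i)]
    [∀ i, AddCommGroup (W i)] [∀ i, Module K (W i)] [∀ i, FiniteDimensional K (W i)]
    (f : ∀ i, V i →ₗ[K] W i) :
    lrank (LinearMap.piMap f) = ∑ i, lrank (f i) := by
  rw [lrank, LinearMap.range_piMap,
    (Submodule.piUnivEquiv fun i => LinearMap.range (f i)).finrank_eq,
    Module.finrank_pi_fintype]
  rfl

end Rank

section RankInvariant

variable {P : Type} [PartialOrder P]

theorem rankInv_eq_iff_toNat_eq (M N : PersistenceModule K P) (x y : P) :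
    rankInv M x y = rankInv N x y ↔ (rankInv M x y).toNat = (rankInv N x y).toNat := by
  by_cases h : x ≤ y <;> simp [rankInv, h]

end RankInvariant

section JordanRank

variable {P : Type} [AddCommGroup P] [PartialOrder P] [IsOrderedAddMonoid P] {n : ℕ}

theorem jordanRk_eq_iff_toNat_eq (M N : PersistenceModule K P) (S : Fin n → Finset P)
    (i : ℕ) (x y : P) :
    jordanRk M S i x y = jordanRk N S i x y ↔
      (jordanRk M S i x y).toNat = (jordanRk N S i x y).toNat := by
  by_cases h : x ≤ y <;> simp [jordanRk, h]

theorem jordanRk_zero_toNat {M : PersistenceModule K P} (hM : M.pfd) (S : Fin n → Finset P)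
    (x y : P) :
    (jordanRk M S 0 x y).toNat =
      ∑ p : SliceIdx S, (rankInv M (x + p.2.1) (y + p.2.1)).toNat := by
  by_cases h : x ≤ y
  · have : ∀ p : SliceIdx S, FiniteDimensional K ((M.shift y).V p.2.1) := fun p => hM _
    rw [jordanRk, dif_pos h, pow_zero, Module.End.one_eq_id, LinearMap.range_id,
      Submodule.map_top, ENat.toNat_natCast]
    exact (lrank_piMap _).trans (Finset.sum_congr rfl fun p _ => by
      rw [rankInv, dif_pos (add_le_add_left h p.2.1), ENat.toNat_natCast]; rfl)
  · simp [jordanRk, rankInv, h]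

end JordanRank

theorem sum_sliceIdx {P β : Type} [DecidableEq P] [AddCommMonoid β] {n : ℕ}
    {S : Fin n → Finset P} (hS : (Set.univ : Set (Fin n)).PairwiseDisjoint S) (φ : P → β) :
    ∑ p : SliceIdx S, φ p.2.1 = ∑ z ∈ Finset.univ.biUnion S, φ z := by
  rw [← Finset.coe_univ] at hS
  rw [Finset.sum_biUnion hS, ← Finset.univ_sigma_univ, Finset.sum_sigma]
  exact Finset.sum_congr rfl fun i _ => Finset.sum_coe_sort _ _

section Grid

variable {d : ℕ} (ℓ : Fin d → ℕ)

def gridFinset : Finset (Fin d → ℤ) :=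
  Fintype.piFinset fun k => Finset.Icc 0 (ℓ k)

theorem mem_gridFinset {z : Fin d → ℤ} : z ∈ gridFinset ℓ ↔ z ∈ gridSet d ℓ := by
  simp [gridFinset, gridSet]

theorem zero_mem_gridFinset : 0 ∈ gridFinset ℓ := by
  simp [gridFinset]

theorem nonneg_of_mem_gridFinset {z : Fin d → ℤ} (hz : z ∈ gridFinset ℓ) : 0 ≤ z :=
  fun k => ((mem_gridFinset ℓ).mp hz k).1

theorem supportedOn.rankInv_toNat_eq_zero {M : PersistenceModule K (Fin d → ℤ)}
    {G : Set (Fin d → ℤ)} (hM : supportedOn M G) {x : Fin d → ℤ} (hx : x ∉ G) (y : Fin d → ℤ) :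
    (rankInv M x y).toNat = 0 := by
  have := hM x hx
  by_cases h : x ≤ y <;> simp [rankInv, h, lrank_eq_zero_of_subsingleton]

theorem pairwiseDisjoint_gridSlice (n : ℕ) :
    (Set.univ : Set (Fin n)).PairwiseDisjoint fun i => gridSlice d ℓ i := by
  intro i _ j _ hij
  refine Finset.disjoint_left.mpr fun z hzi hzj => hij (Fin.ext ?_)
  simp only [gridSlice, Finset.mem_filter] at hzi hzj
  exact_mod_cast hzi.2.symm.trans hzj.2

theorem biUnion_gridSlice {n : ℕ} (hn : n = (∑ k, ℓ k) + 1) :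
    Finset.univ.biUnion (fun i : Fin n => gridSlice d ℓ i) = gridFinset ℓ := by
  ext z
  simp only [Finset.mem_biUnion, Finset.mem_univ, true_and, gridSlice, Finset.mem_filter]
  refine ⟨fun ⟨_, hz, _⟩ => hz, fun hz => ?_⟩
  have hbounds : ∀ k, 0 ≤ z k ∧ z k ≤ ℓ k := (mem_gridFinset ℓ).mp hz
  have h0 : 0 ≤ ∑ k, z k := Finset.sum_nonneg fun k _ => (hbounds k).1
  have h1 : ∑ k, z k ≤ ∑ k, (ℓ k : ℤ) := Finset.sum_le_sum fun k _ => (hbounds k).2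
  have hn' : (n : ℤ) = ∑ k, (ℓ k : ℤ) + 1 := by rw [hn]; push_cast; rfl
  exact ⟨⟨(∑ k, z k).toNat, by omega⟩, hz, (Int.toNat_of_nonneg h0).symm⟩

end Grid

theorem statement11_general (K : Type) [Field K] (d : ℕ) (ℓ : Fin d → ℕ)
    (n : ℕ) (hn : n = (∑ k, ℓ k) + 1)
    (M N : PersistenceModule K (Fin d → ℤ)) (hM : M.pfd) (hN : N.pfd)
    (hMsupp : supportedOn M (gridSet d ℓ)) (hNsupp : supportedOn N (gridSet d ℓ)) :
    (∀ x y : Fin d → ℤ,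
        jordanRk M (fun i : Fin n => gridSlice d ℓ (i : ℕ)) 0 x y =
        jordanRk N (fun i : Fin n => gridSlice d ℓ (i : ℕ)) 0 x y) ↔
    (∀ x y : Fin d → ℤ, rankInv M x y = rankInv N x y) := by
  have hsum : ∀ L : PersistenceModule K (Fin d → ℤ), L.pfd → ∀ x y,
      (jordanRk L (fun i : Fin n => gridSlice d ℓ (i : ℕ)) 0 x y).toNat =
        ∑ z ∈ gridFinset ℓ, (rankInv L (x + z) (y + z)).toNat := fun L hL x y => by
    rw [jordanRk_zero_toNat hL, ← biUnion_gridSlice ℓ hn,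
      ← sum_sliceIdx (pairwiseDisjoint_gridSlice ℓ n)]
  simp only [jordanRk_eq_iff_toNat_eq, rankInv_eq_iff_toNat_eq, hsum M hM, hsum N hN]
  refine ⟨fun h x y => ?_, fun h x y => Finset.sum_congr rfl fun z _ => h _ _⟩
  have hsupp : ∀ a ∉ gridFinset ℓ, ∀ b, (rankInv M a b).toNat = (rankInv N a b).toNat := by
    intro a ha b
    rw [mem_gridFinset] at ha
    rw [hMsupp.rankInv_toNat_eq_zero ha, hNsupp.rankInv_toNat_eq_zero ha]
  exact congrFun₂ (eq_of_sum_translates_eq (zero_mem_gridFinset ℓ)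
    (fun _ => nonneg_of_mem_gridFinset ℓ) hsupp h) x y

/-- for modules supported on a grid with its norm slicing, the degree-`0`
Jordan rank invariants agree iff the classical rank invariants agree. -/
theorem statement11 (K : Type) [Field K] (d : ℕ) (hd : 1 ≤ d) (ℓ : Fin d → ℕ)
    (n : ℕ) (hn : n = (∑ k, ℓ k) + 1)
    (M N : PersistenceModule K (Fin d → ℤ)) (hM : M.pfd) (hN : N.pfd)
    (hMsupp : supportedOn M (gridSet d ℓ)) (hNsupp : supportedOn N (gridSet d ℓ)) :
    (∀ x y : Fin d → ℤ,
        jordanRk M (fun i : Fin n => gridSlice d ℓ (i : ℕ)) 0 x y =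
        jordanRk N (fun i : Fin n => gridSlice d ℓ (i : ℕ)) 0 x y) ↔
    (∀ x y : Fin d → ℤ, rankInv M x y = rankInv N x y) :=
  statement11_general K d ℓ n hn M N hM hN hMsupp hNsupp

end
end
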